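/- Let q > 1, γ > 0, F: ℝ₊ → ℝ convex, differentiable on (0,∞) with finite right derivative F'(0), extended by +∞ on negative reals, and let φ(m,w) = F(m) + b̂(m,w). For (m,w) ∈ ℝ × ℝ^4: prox_{γφ}(m,w) = (0,0) if m ≤ γF'(0) and Q_{m,w}(0,0) ≥ 0, and otherwise prox_{γφ}(m,w) = (p*, v_{m,w}(p*,0)) where p* > 0 is the unique solution of Q_{m,w}(p,0) = 0, v_{m,w}(p,δ) = p/(p + γ^{2/q}(q')^{1−2/q}(p + γF'(p) − m + δ)^{1−2/q}) · P_K w, and Q_{m,w}(p,δ) = (p + γF'(p) − m + δ)(p + γ^{2/q}(q')^{1−2/q}(p + γF'(p) − m + δ)^{1−2/q})^q − (γ/q')|P_K w|^q. -/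

import Mathlib

open scoped BigOperators
open Classical

noncomputable section

/-- Euclidean norm on ℝ⁴. -/
def nrm4 (w : Fin 4 → ℝ) : ℝ := Real.sqrt (∑ i, (w i) ^ 2)

/-- The cone `K = ℝ₊ × ℝ₋ × ℝ₊ × ℝ₋`. -/
def Kset : Set (Fin 4 → ℝ) := {w | 0 ≤ w 0 ∧ w 1 ≤ 0 ∧ 0 ≤ w 2 ∧ w 3 ≤ 0}

/-- Euclidean projection onto `K`. -/
def PK (w : Fin 4 → ℝ) : Fin 4 → ℝ := ![max (w 0) 0, min (w 1) 0, max (w 2) 0, min (w 3) 0]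

/-- The cost function `b`. -/
def bfun (q : ℝ) (m : ℝ) (w : Fin 4 → ℝ) : EReal :=
  if 0 < m then (((nrm4 w ^ q) / (q * m ^ (q - 1)) : ℝ) : EReal)
  else if m = 0 ∧ w = 0 then (0 : EReal) else ⊤

/-- `b̂ = b + ι_{ℝ × K}`. -/
def bhat (q : ℝ) (m : ℝ) (w : Fin 4 → ℝ) : EReal :=
  bfun q m w + (if w ∈ Kset then (0 : EReal) else ⊤)

/-- The auxiliary function `Q_{m,w}(p,δ)`. -/
def Qfun (q q' γ : ℝ) (F' : ℝ → ℝ) (m : ℝ) (w : Fin 4 → ℝ) (p δ : ℝ) : ℝ :=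
  (p + γ * F' p - m + δ) *
      (p + γ ^ (2 / q) * q' ^ (1 - 2 / q) * (p + γ * F' p - m + δ) ^ (1 - 2 / q)) ^ q
    - (γ / q') * nrm4 (PK w) ^ q

/-- The auxiliary vector `v_{m,w}(p,δ)`. -/
def vfun (q q' γ : ℝ) (F' : ℝ → ℝ) (m : ℝ) (w : Fin 4 → ℝ) (p δ : ℝ) : Fin 4 → ℝ :=
  fun i =>
    (p / (p + γ ^ (2 / q) * q' ^ (1 - 2 / q) * (p + γ * F' p - m + δ) ^ (1 - 2 / q))) * PK w i


/-!
Both candidates are certified by a subgradient inequality. Young's inequality in the form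
`a r ≤ p a^{q'}/q' + r^q/(q p^{q-1})` gives `b̂(p,v) ≥ α p + ⟨β, v⟩` on the domain of `b̂` as soon
as `α + |β|^{q'}/q' ≤ 0`. Adding the tangent inequality of `F` at `s`, the expansion of the squares
and the normal-cone inequality `⟨w - P_K w, v⟩ ≤ 0`, the point `(s, λ P_K w)` minimises the prox
objective once `m - s = γ (F'(s) + α)`, `β = (1 - λ)/γ · P_K w` and
`b̂(s, λ P_K w) = α s + ⟨β, λ P_K w⟩`.

At `(0,0)` (with `λ = 0`) the subgradient condition is exactly `Q_{m,w}(0,0) ≥ 0`. Otherwise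
`Q_{m,w}(·,0)` is continuous and strictly increasing on `D(m) = {p ≥ 0 | p + γ F'(p) ≥ m}` (`F'` is
continuous, being monotone with the Darboux property), nonpositive at the left end of `D(m)` and
eventually nonnegative; at its root `p*` the three conditions hold with `v_{m,w}(p*,0) = λ P_K w`.
-/

open Set

namespace ConvexOn

variable {S : Set ℝ} {f f' : ℝ → ℝ}

theorem add_deriv_mul_sub_le (hfc : ConvexOn ℝ S f)
    (hf : ∀ x ∈ S, HasDerivWithinAt f (f' x) S x) {x y : ℝ} (hx : x ∈ S) (hy : y ∈ S) :
    f x + f' x * (y - x) ≤ f y := by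
  rcases lt_trichotomy x y with hxy | rfl | hxy
  · have h := hfc.le_slope_of_hasDerivWithinAt hx hy hxy (hf x hx)
    rw [slope_def_field, le_div_iff₀ (sub_pos.2 hxy)] at h
    linarith
  · simp
  · have h := hfc.slope_le_of_hasDerivWithinAt hy hx hxy (hf x hx)
    rw [slope_def_field, div_le_iff₀ (sub_pos.2 hxy)] at h
    linarith

theorem monotoneOn_of_hasDerivWithinAt (hfc : ConvexOn ℝ S f)
    (hf : ∀ x ∈ S, HasDerivWithinAt f (f' x) S x) : MonotoneOn f' S := by
  intro x hx y hy hxy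
  rcases hxy.eq_or_lt with rfl | hxy
  · rfl
  exact (hfc.le_slope_of_hasDerivWithinAt hx hy hxy (hf x hx)).trans
    (hfc.slope_le_of_hasDerivWithinAt hx hy hxy (hf y hy))

end ConvexOn

theorem StrictMonoOn.continuousOn_Ici_of_ordConnected_image {f : ℝ → ℝ} {a : ℝ}
    (hf : StrictMonoOn f (Ici a)) (himg : (f '' Ici a).OrdConnected) : ContinuousOn f (Ici a) := by
  intro x hx
  have hx1 : x < x + 1 := lt_add_one x
  have hsub : Icc (f a) (f (x + 1)) ⊆ f '' Ici a :=
    himg.out (mem_image_of_mem f self_mem_Ici) (mem_image_of_mem f (le_trans hx hx1.le))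
  rcases (mem_Ici.1 hx).eq_or_lt with rfl | hax
  · refine hf.continuousWithinAt_right_of_image_mem_nhdsWithin self_mem_nhdsWithin ?_
    exact Filter.mem_of_superset (Icc_mem_nhdsGE (hf self_mem_Ici (mem_Ici.2 hx1.le) hx1)) hsub
  · refine (hf.continuousAt_of_image_mem_nhds (Ici_mem_nhds hax) ?_).continuousWithinAt
    exact Filter.mem_of_superset (Icc_mem_nhds (hf self_mem_Ici hx hax)
      (hf hx (mem_Ici.2 (hx.trans hx1.le)) hx1)) hsub

/-- `x ↦ x + f' x` is strictly monotone and, by Darboux's theorem, has an order-connected image. -/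
theorem ConvexOn.continuousOn_of_hasDerivWithinAt {f f' : ℝ → ℝ} {a : ℝ}
    (hfc : ConvexOn ℝ (Ici a) f) (hf : ∀ x ∈ Ici a, HasDerivWithinAt f (f' x) (Ici a) x) :
    ContinuousOn f' (Ici a) := by
  have hmono : StrictMonoOn (fun x => x + f' x) (Ici a) := fun x hx y hy hxy =>
    add_lt_add_of_lt_of_le hxy (hfc.monotoneOn_of_hasDerivWithinAt hf hx hy hxy.le)
  have hderiv : ∀ x ∈ Ici a, HasDerivWithinAt (fun x => x ^ 2 / 2 + f x) (x + f' x) (Ici a) x :=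
    fun x hx => (((hasDerivAt_pow 2 x).div_const 2).hasDerivWithinAt.add (hf x hx)).congr_deriv
      (by ring)
  have hcont := hmono.continuousOn_Ici_of_ordConnected_image
    (ordConnected_Ici.image_hasDerivWithinAt hderiv)
  exact (hcont.sub continuousOn_id).congr fun x _ => by simp

theorem young_inequality_perspective {q q' : ℝ} (hqq' : q.HolderConjugate q') {a p r : ℝ}
    (ha : 0 ≤ a) (hp : 0 ≤ p) (hr : 0 ≤ r) (hpr : p = 0 → r = 0) :
    a * r ≤ p * a ^ q' / q' + r ^ q / (q * p ^ (q - 1)) := by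
  rcases hp.eq_or_lt with rfl | hp
  · simp [hpr rfl, Real.zero_rpow hqq'.ne_zero]
  have hs : 0 < p ^ (1 / q') := Real.rpow_pos_of_pos hp _
  have h := Real.young_inequality_of_nonneg (mul_nonneg ha hs.le) (div_nonneg hr hs.le) hqq'.symm
  have e1 : (a * p ^ (1 / q')) ^ q' = p * a ^ q' := by
    rw [Real.mul_rpow ha hs.le, ← Real.rpow_mul hp.le, one_div_mul_cancel hqq'.symm.ne_zero,
      Real.rpow_one, mul_comm]
  have e2 : (r / p ^ (1 / q')) ^ q = r ^ q / p ^ (q - 1) := by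
    rw [Real.div_rpow hr hs.le, ← Real.rpow_mul hp.le, one_div_mul_eq_div,
      hqq'.div_conj_eq_sub_one]
  have e3 : a * p ^ (1 / q') * (r / p ^ (1 / q')) = a * r := by field_simp
  rw [e1, e2, e3, div_div, mul_comm (p ^ (q - 1))] at h
  exact h

theorem mul_add_mul_rpow_eq {q C b p : ℝ} (hq : 1 < q) (hC : 0 ≤ C) (hb : 0 ≤ b) (hp : 0 ≤ p) :
    b * (p + C * b ^ (1 - 2 / q)) ^ q = (p * b ^ (1 / q) + C * b ^ ((q - 1) / q)) ^ q := by
  have hq0 : 0 < q := by linarith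
  rcases hb.eq_or_lt with rfl | hb
  · rw [Real.zero_rpow (one_div_pos.2 hq0).ne', Real.zero_rpow (div_pos (by linarith) hq0).ne']
    simp [Real.zero_rpow hq0.ne']
  calc b * (p + C * b ^ (1 - 2 / q)) ^ q = (b ^ (1 / q)) ^ q * (p + C * b ^ (1 - 2 / q)) ^ q := by
        rw [one_div, Real.rpow_inv_rpow hb.le hq0.ne']
    _ = (b ^ (1 / q) * (p + C * b ^ (1 - 2 / q))) ^ q :=
        (Real.mul_rpow (by positivity) (by positivity)).symm
    _ = _ := by
        rw [mul_add, mul_left_comm, ← Real.rpow_add hb, mul_comm (b ^ (1 / q))]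
        congr 4
        field_simp
        ring

/-- This is where the constant `γ^{2/q} q'^{1-2/q}` in `Q` and `v` comes from. -/
theorem const_mul_rpow_one_sub_two_div_mul {q q' γ ρ : ℝ} (hqq' : q.HolderConjugate q') (hγ : 0 < γ)
    (hρ : 0 ≤ ρ) :
    γ ^ (2 / q) * q' ^ (1 - 2 / q) * (γ * ρ ^ q / q') ^ (1 - 2 / q) * ρ = γ * ρ ^ (q - 1) := by
  have hq0 := hqq'.pos
  have hq'0 := hqq'.symm.pos
  rcases hρ.eq_or_lt with rfl | hρ
  · simp [Real.zero_rpow hqq'.sub_one_ne_zero]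
  have hγ1 : γ ^ (2 / q) * γ ^ (1 - 2 / q) = γ := by rw [← Real.rpow_add hγ]; simp
  have hρ1 : ρ ^ (q * (1 - 2 / q)) * ρ = ρ ^ (q - 1) := by
    rw [← Real.rpow_add_one hρ.ne']; congr 1; field_simp; ring
  rw [Real.div_rpow (by positivity) hq'0.le, Real.mul_rpow hγ.le (by positivity),
    ← Real.rpow_mul hρ.le]
  calc _ = (γ ^ (2 / q) * γ ^ (1 - 2 / q)) * (ρ ^ (q * (1 - 2 / q)) * ρ)
        * (q' ^ (1 - 2 / q) / q' ^ (1 - 2 / q)) := by ring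
    _ = _ := by rw [hγ1, hρ1, div_self (by positivity), mul_one]

lemma nrm4_nonneg (v : Fin 4 → ℝ) : 0 ≤ nrm4 v := Real.sqrt_nonneg _

lemma nrm4_zero : nrm4 0 = 0 := by simp [nrm4]

lemma sq_nrm4 (v : Fin 4 → ℝ) : nrm4 v ^ 2 = ∑ i, v i ^ 2 :=
  Real.sq_sqrt (Finset.sum_nonneg fun _ _ => sq_nonneg _)

lemma nrm4_const_mul {a : ℝ} (ha : 0 ≤ a) (v : Fin 4 → ℝ) :
    nrm4 (fun i => a * v i) = a * nrm4 v := by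
  simp only [nrm4, mul_pow, ← Finset.mul_sum]
  rw [Real.sqrt_mul (sq_nonneg a), Real.sqrt_sq ha]

lemma sum_mul_le_nrm4_mul_nrm4 (u v : Fin 4 → ℝ) : ∑ i, u i * v i ≤ nrm4 u * nrm4 v :=
  Real.sum_mul_le_sqrt_mul_sqrt _ _ _

lemma const_mul_PK_mem_Kset {a : ℝ} (ha : 0 ≤ a) (w : Fin 4 → ℝ) :
    (fun i => a * PK w i) ∈ Kset := by
  refine ⟨?_, ?_, ?_, ?_⟩ <;> simp only [PK] <;>
    simp [mul_nonneg, mul_nonpos_of_nonneg_of_nonpos, ha]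

lemma sum_sub_PK_mul_PK (w : Fin 4 → ℝ) : ∑ i, (w i - PK w i) * PK w i = 0 := by
  have hmax (x : ℝ) : (x - max x 0) * max x 0 = 0 := by rcases le_total x 0 with h | h <;> simp [h]
  have hmin (x : ℝ) : (x - min x 0) * min x 0 = 0 := by rcases le_total x 0 with h | h <;> simp [h]
  simp [Fin.sum_univ_four, PK, hmax, hmin]

lemma sum_sub_PK_mul_nonpos (w : Fin 4 → ℝ) {v : Fin 4 → ℝ} (hv : v ∈ Kset) :
    ∑ i, (w i - PK w i) * v i ≤ 0 := by
  have hmax (x : ℝ) {y : ℝ} (hy : 0 ≤ y) : (x - max x 0) * y ≤ 0 := by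
    rcases le_total x 0 with h | h <;> simp [h]; nlinarith
  have hmin (x : ℝ) {y : ℝ} (hy : y ≤ 0) : (x - min x 0) * y ≤ 0 := by
    rcases le_total x 0 with h | h <;> simp [h]; nlinarith
  obtain ⟨h0, h1, h2, h3⟩ := hv
  simp only [Fin.sum_univ_four, PK, Matrix.cons_val_zero, Matrix.cons_val_one, Matrix.cons_val_two,
    Matrix.cons_val_three, Matrix.head_cons, Matrix.tail_cons]
  linarith [hmax (w 0) h0, hmin (w 1) h1, hmax (w 2) h2, hmin (w 3) h3]

/-- The prox objective on the domain of `b̂`, where it is finite; at `p = 0` the `b`-term is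
`0 / 0 = 0`, matching `b̂(0,0) = 0`. -/
def proxObjective (q γ : ℝ) (F : ℝ → ℝ) (m : ℝ) (w : Fin 4 → ℝ) (p : ℝ) (v : Fin 4 → ℝ) : ℝ :=
  γ * (nrm4 v ^ q / (q * p ^ (q - 1)) + F p) + ((m - p) ^ 2 + ∑ i, (w i - v i) ^ 2) / 2

lemma bhat_of_mem {q p : ℝ} {v : Fin 4 → ℝ} (hp : 0 ≤ p) (hv : v ∈ Kset) (hpv : p = 0 → v = 0) :
    bhat q p v = ((nrm4 v ^ q / (q * p ^ (q - 1)) : ℝ) : EReal) := by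
  rcases hp.eq_or_lt with rfl | hp
  · obtain rfl := hpv rfl
    rcases eq_or_ne q 0 with rfl | hq
    · simp [bhat, bfun, Kset]
    · simp [bhat, bfun, Kset, nrm4_zero, Real.zero_rpow hq]
  · simp [bhat, bfun, hp, hv]

lemma bhat_of_not_mem {q p : ℝ} {v : Fin 4 → ℝ} (h : ¬ (0 ≤ p ∧ v ∈ Kset ∧ (p = 0 → v = 0))) :
    bhat q p v = ⊤ := by
  unfold bhat bfun
  by_cases hp : 0 < p
  · have hv : v ∉ Kset := fun hv => h ⟨hp.le, hv, fun h0 => absurd h0 hp.ne'⟩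
    simp [hp, hv]
  · have : ¬ (p = 0 ∧ v = 0) := fun ⟨hp0, hv0⟩ => h ⟨hp0.ge, hv0 ▸ by simp [Kset], fun _ => hv0⟩
    rw [if_neg hp, if_neg this, EReal.top_add_of_ne_bot (by split_ifs <;> simp)]

lemma coe_proxObjective {q γ : ℝ} {F : ℝ → ℝ} {m : ℝ} {w : Fin 4 → ℝ} {p : ℝ} {v : Fin 4 → ℝ}
    (hp : 0 ≤ p) (hv : v ∈ Kset) (hpv : p = 0 → v = 0) :
    ((proxObjective q γ F m w p v : ℝ) : EReal) = (γ : EReal) * (bhat q p v + ((F p : ℝ) : EReal))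
      + (((m - p) ^ 2 + ∑ i, (w i - v i) ^ 2) / 2 : ℝ) := by
  rw [bhat_of_mem hp hv hpv, proxObjective]
  norm_cast

lemma coe_le_of_forall_le_proxObjective {q γ : ℝ} (hγ : 0 < γ) {F : ℝ → ℝ} {m : ℝ}
    {w : Fin 4 → ℝ} {L : ℝ}
    (h : ∀ p v, 0 ≤ p → v ∈ Kset → (p = 0 → v = 0) → L ≤ proxObjective q γ F m w p v)
    (z : ℝ × (Fin 4 → ℝ)) :
    (L : EReal) ≤ (γ : EReal) * (bhat q z.1 z.2 + (if 0 ≤ z.1 then ((F z.1 : ℝ) : EReal) else ⊤))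
      + (((m - z.1) ^ 2 + ∑ i, (w i - z.2 i) ^ 2) / 2 : ℝ) := by
  by_cases hz : 0 ≤ z.1 ∧ z.2 ∈ Kset ∧ (z.1 = 0 → z.2 = 0)
  · rw [if_pos hz.1, ← coe_proxObjective hz.1 hz.2.1 hz.2.2]
    exact EReal.coe_le_coe_iff.2 (h _ _ hz.1 hz.2.1 hz.2.2)
  · rw [bhat_of_not_mem hz, EReal.top_add_of_ne_bot (by split_ifs <;> simp),
      EReal.coe_mul_top_of_pos hγ, EReal.top_add_coe]
    exact le_top

/-- The subgradient of `b̂` at `(s, λ P_K w)` is `(α, (1 - λ)/γ · P_K w)`; `heuler` is Euler's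
identity for this `1`-homogeneous function. -/
theorem proxObjective_le_of_optimality {q q' γ : ℝ} (hqq' : q.HolderConjugate q') (hγ : 0 < γ)
    {F F' : ℝ → ℝ} {m : ℝ} {w : Fin 4 → ℝ} {s lam α : ℝ} (hlam0 : 0 ≤ lam) (hlam1 : lam ≤ 1)
    (hα : α + ((1 - lam) * nrm4 (PK w) / γ) ^ q' / q' ≤ 0)
    (heuler : (lam * nrm4 (PK w)) ^ q / (q * s ^ (q - 1))
      = α * s + (1 - lam) * lam * nrm4 (PK w) ^ 2 / γ)
    (hm : m - s = γ * (F' s + α)) (hF : ∀ p, 0 ≤ p → F s + F' s * (p - s) ≤ F p)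
    {p : ℝ} {v : Fin 4 → ℝ} (hp : 0 ≤ p) (hv : v ∈ Kset) (hpv : p = 0 → v = 0) :
    proxObjective q γ F m w s (fun i => lam * PK w i) ≤ proxObjective q γ F m w p v := by
  have hc := nrm4_nonneg (PK w)
  have hb : γ * α * p + (1 - lam) * nrm4 (PK w) * nrm4 v
      ≤ γ * (nrm4 v ^ q / (q * p ^ (q - 1))) := by
    have hY := young_inequality_perspective hqq' (a := (1 - lam) * nrm4 (PK w) / γ)
      (by have := sub_nonneg.2 hlam1; positivity) hp (nrm4_nonneg v)
      (fun h => by rw [hpv h, nrm4_zero])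
    have hαp : p * α + p * ((1 - lam) * nrm4 (PK w) / γ) ^ q' / q' ≤ 0 := by
      rw [mul_div_assoc, ← mul_add]; exact mul_nonpos_of_nonneg_of_nonpos hp hα
    have := mul_le_mul_of_nonneg_left (by linarith : (1 - lam) * nrm4 (PK w) / γ * nrm4 v
      ≤ -(p * α) + nrm4 v ^ q / (q * p ^ (q - 1))) hγ.le
    field_simp at this
    linarith
  have hCS := mul_le_mul_of_nonneg_left (sum_mul_le_nrm4_mul_nrm4 (PK w) v) (sub_nonneg.2 hlam1)
  have hexp : ∑ i, (w i - v i) ^ 2 = ∑ i, (w i - lam * PK w i) ^ 2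
      - 2 * ∑ i, (w i - PK w i) * v i + 2 * lam * ∑ i, (w i - PK w i) * PK w i
      - 2 * (1 - lam) * ∑ i, PK w i * v i + 2 * (1 - lam) * lam * ∑ i, PK w i ^ 2
      + ∑ i, (v i - lam * PK w i) ^ 2 := by
    simp only [Fin.sum_univ_four]; ring
  have hms : (p - s) * (m - s) = γ * F' s * (p - s) + γ * α * (p - s) := by rw [hm]; ring
  have hFp := mul_le_mul_of_nonneg_left (hF p hp) hγ.le
  have hvu : 0 ≤ ∑ i, (v i - lam * PK w i) ^ 2 := Finset.sum_nonneg fun i _ => sq_nonneg _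
  have hγeuler : γ * (α * s + (1 - lam) * lam * nrm4 (PK w) ^ 2 / γ)
      = γ * α * s + (1 - lam) * lam * nrm4 (PK w) ^ 2 := by field_simp
  have hN := sum_sub_PK_mul_nonpos w hv
  unfold proxObjective
  rw [nrm4_const_mul hlam0, heuler, hexp, sum_sub_PK_mul_PK, ← sq_nrm4 (PK w)]
  nlinarith [sq_nonneg (p - s)]

theorem rpow_conj_le_of_Qfun_zero_nonneg {q q' γ : ℝ} (hqq' : q.HolderConjugate q') (hγ : 0 < γ)
    {F' : ℝ → ℝ} {m : ℝ} {w : Fin 4 → ℝ} (hm : m ≤ γ * F' 0)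
    (hQ : 0 ≤ Qfun q q' γ F' m w 0 0) :
    γ * (nrm4 (PK w) / γ) ^ q' / q' ≤ γ * F' 0 - m := by
  have hq := hqq'.lt
  have hq'0 := hqq'.symm.pos
  have hc := nrm4_nonneg (PK w)
  simp only [Qfun, zero_add, add_zero, sub_nonneg] at hQ
  generalize hAdef : γ * F' 0 - m = A at hQ ⊢
  have hA : 0 ≤ A := by linarith
  have hCA : A * (γ ^ (2 / q) * q' ^ (1 - 2 / q) * A ^ (1 - 2 / q)) ^ q
      = γ ^ 2 * q' ^ (q - 1) / q' * A ^ (q - 1) := by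
    have := mul_add_mul_rpow_eq hq (by positivity : 0 ≤ γ ^ (2 / q) * q' ^ (1 - 2 / q)) hA le_rfl
    rw [zero_add, zero_mul, zero_add] at this
    rw [this, Real.mul_rpow (by positivity) (by positivity),
      Real.mul_rpow (by positivity) (by positivity), ← Real.rpow_mul hγ.le,
      ← Real.rpow_mul hq'0.le, ← Real.rpow_mul hA, show 2 / q * q = 2 by field_simp,
      show (1 - 2 / q) * q = q - 1 - 1 by field_simp; ring,
      show (q - 1) / q * q = q - 1 by field_simp, Real.rpow_sub_one hq'0.ne', Real.rpow_two]
    ring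
  have hcq : nrm4 (PK w) ^ q ≤ γ * (q' * A) ^ (q - 1) := by
    rw [Real.mul_rpow hq'0.le hA]
    have := mul_le_mul_of_nonneg_left (hQ.trans_eq hCA) (by positivity : 0 ≤ q' / γ)
    field_simp at this
    linarith
  have hmono := Real.rpow_le_rpow (by positivity) hcq (sub_nonneg.2 hqq'.symm.lt.le)
  rw [← Real.rpow_mul hc, Real.mul_rpow hγ.le (by positivity), ← Real.rpow_mul (by positivity),
    mul_sub_one, hqq'.mul_eq_add, add_sub_cancel_left,
    show (q - 1) * (q' - 1) = 1 by linear_combination hqq'.mul_eq_add, Real.rpow_one] at hmono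
  have hγq' : γ ^ q' = γ ^ (q' - 1) * γ := by rw [← Real.rpow_add_one hγ.ne', sub_add_cancel]
  rw [Real.div_rpow hc hγ.le, hγq', div_le_iff₀ hq'0]
  field_simp
  linarith

theorem proxObjective_zero_le {q q' γ : ℝ} (hqq' : q.HolderConjugate q') (hγ : 0 < γ)
    {F F' : ℝ → ℝ} {m : ℝ} {w : Fin 4 → ℝ} (hm : m ≤ γ * F' 0)
    (hQ : 0 ≤ Qfun q q' γ F' m w 0 0) (hF : ∀ p, 0 ≤ p → F 0 + F' 0 * (p - 0) ≤ F p)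
    {p : ℝ} {v : Fin 4 → ℝ} (hp : 0 ≤ p) (hv : v ∈ Kset) (hpv : p = 0 → v = 0) :
    proxObjective q γ F m w 0 0 ≤ proxObjective q γ F m w p v := by
  have hbound := rpow_conj_le_of_Qfun_zero_nonneg hqq' hγ hm hQ
  have h0 : (fun i => (0 : ℝ) * PK w i) = 0 := funext fun i => zero_mul _
  rw [← h0]
  refine proxObjective_le_of_optimality hqq' hγ (s := 0) (α := m / γ - F' 0) le_rfl zero_le_one
    ?_ ?_ ?_ hF hp hv hpv
  · rw [sub_zero, one_mul]
    have := div_le_div_of_nonneg_right hbound hγ.le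
    field_simp at this ⊢
    linarith
  · simp [Real.zero_rpow hqq'.ne_zero]
  · field_simp; ring

lemma vfun_mem_Kset {q q' γ : ℝ} (hq' : 0 < q') (hγ : 0 < γ) {F' : ℝ → ℝ} {m : ℝ}
    {w : Fin 4 → ℝ} {s : ℝ} (hs : 0 ≤ s) (hB : 0 ≤ s + γ * F' s - m) :
    vfun q q' γ F' m w s 0 ∈ Kset :=
  const_mul_PK_mem_Kset (div_nonneg hs (add_nonneg hs (mul_nonneg (by positivity)
    (Real.rpow_nonneg (by linarith) _)))) w

lemma relations_of_root {q q' γ : ℝ} (hqq' : q.HolderConjugate q') (hγ : 0 < γ) {s B c E : ℝ}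
    (hc : 0 ≤ c) (hE : E = s + γ ^ (2 / q) * q' ^ (1 - 2 / q) * B ^ (1 - 2 / q)) (hE0 : 0 < E)
    (hQ : B * E ^ q - γ / q' * c ^ q = 0) :
    B = γ * (c / E) ^ q / q' ∧ (1 - s / E) * c / γ = (c / E) ^ (q - 1) := by
  have hBρ : B = γ * (c / E) ^ q / q' := by
    have := hqq'.symm.pos
    rw [Real.div_rpow hc hE0.le]
    field_simp at hQ ⊢
    linarith
  refine ⟨hBρ, ?_⟩
  have hscale := const_mul_rpow_one_sub_two_div_mul hqq' hγ (div_nonneg hc hE0.le)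
  rw [← hBρ, show γ ^ (2 / q) * q' ^ (1 - 2 / q) * B ^ (1 - 2 / q) = E - s by rw [hE]; ring]
    at hscale
  calc (1 - s / E) * c / γ = (E - s) * (c / E) / γ := by field_simp
    _ = (c / E) ^ (q - 1) := by rw [hscale]; field_simp

theorem proxObjective_vfun_le {q q' γ : ℝ} (hqq' : q.HolderConjugate q') (hγ : 0 < γ)
    {F F' : ℝ → ℝ} {m : ℝ} {w : Fin 4 → ℝ} {s : ℝ} (hs : 0 < s) (hB : 0 ≤ s + γ * F' s - m)
    (hQ : Qfun q q' γ F' m w s 0 = 0) (hF : ∀ p, 0 ≤ p → F s + F' s * (p - s) ≤ F p)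
    {p : ℝ} {v : Fin 4 → ℝ} (hp : 0 ≤ p) (hv : v ∈ Kset) (hpv : p = 0 → v = 0) :
    proxObjective q γ F m w s (vfun q q' γ F' m w s 0) ≤ proxObjective q γ F m w p v := by
  have hq'0 := hqq'.symm.pos
  have hvfun : vfun q q' γ F' m w s 0 = fun i => s / (s + γ ^ (2 / q) * q' ^ (1 - 2 / q)
      * (s + γ * F' s - m) ^ (1 - 2 / q)) * PK w i := by
    funext i; simp only [vfun, add_zero]
  simp only [Qfun, add_zero] at hQ
  rw [hvfun]
  generalize hBdef : s + γ * F' s - m = B at hB hQ ⊢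
  generalize hE : s + γ ^ (2 / q) * q' ^ (1 - 2 / q) * B ^ (1 - 2 / q) = E at hQ ⊢
  have hsE : s ≤ E := hE ▸ le_add_of_nonneg_right (by positivity)
  have hE0 : 0 < E := hs.trans_le hsE
  have hc := nrm4_nonneg (PK w)
  obtain ⟨hBρ, hdual⟩ := relations_of_root hqq' hγ hc hE.symm hE0 hQ
  generalize hρ : nrm4 (PK w) / E = ρ at hBρ hdual
  have hρ0 : 0 ≤ ρ := hρ ▸ div_nonneg hc hE0.le
  have ht : s / E * nrm4 (PK w) = s * ρ := by rw [← hρ]; ring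
  refine proxObjective_le_of_optimality hqq' hγ (α := -(ρ ^ q / q')) (by positivity)
    ((div_le_one hE0).2 hsE) ?_ ?_ ?_ hF hp hv hpv
  · rw [hdual, ← Real.rpow_mul hρ0, hqq'.sub_one_mul_conj]; simp
  · have hρq : ρ ^ q = ρ ^ (q - 1) * ρ := by
      rw [← Real.rpow_add_one' hρ0 (by linarith [hqq'.lt]), sub_add_cancel]
    have hsq : s ^ q = s ^ (q - 1) * s := by
      rw [← Real.rpow_add_one hs.ne', sub_add_cancel]
    have hmix : (1 - s / E) * (s / E) * nrm4 (PK w) ^ 2 / γ = s * ρ ^ q := by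
      calc _ = ((1 - s / E) * nrm4 (PK w) / γ) * (s / E * nrm4 (PK w)) := by ring
        _ = s * ρ ^ q := by rw [hdual, ht, hρq]; ring
    rw [mul_assoc (1 - s / E), ← mul_assoc (1 - s / E), hmix, ht, Real.mul_rpow hs.le hρ0, hsq,
      show s ^ (q - 1) * s * ρ ^ q / (q * s ^ (q - 1)) = s * ρ ^ q * q⁻¹ by field_simp,
      ← hqq'.symm.one_sub_inv]
    ring
  · linear_combination -hBdef - hBρ

/-- The domain `D(m)` of the paper. -/
def rootDomain (γ : ℝ) (F' : ℝ → ℝ) (m : ℝ) : Set ℝ := {p | 0 ≤ p ∧ m ≤ p + γ * F' p}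

section Root

variable {q q' γ : ℝ} {F' : ℝ → ℝ} {m : ℝ} {w : Fin 4 → ℝ}

lemma Qfun_eq_rpow (hqq' : q.HolderConjugate q') (hγ : 0 < γ) {p : ℝ} (hp : p ∈ rootDomain γ F' m) :
    Qfun q q' γ F' m w p 0 = (p * (p + γ * F' p - m) ^ (1 / q)
      + γ ^ (2 / q) * q' ^ (1 - 2 / q) * (p + γ * F' p - m) ^ ((q - 1) / q)) ^ q
      - γ / q' * nrm4 (PK w) ^ q := by
  have := hqq'.symm.pos
  simp only [Qfun, add_zero]
  rw [mul_add_mul_rpow_eq hqq'.lt (by positivity) (by linarith [hp.2]) hp.1]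

lemma strictMonoOn_Qfun (hqq' : q.HolderConjugate q') (hγ : 0 < γ)
    (hF' : MonotoneOn F' (Ici 0)) :
    StrictMonoOn (fun p => Qfun q q' γ F' m w p 0) (rootDomain γ F' m) := by
  intro x hx y hy hxy
  have hq0 := hqq'.pos
  have := hqq'.symm.pos
  have hB : x + γ * F' x - m < y + γ * F' y - m := by
    have := mul_le_mul_of_nonneg_left (hF' hx.1 hy.1 hxy.le) hγ.le
    linarith
  have hBx : 0 ≤ x + γ * F' x - m := by linarith [hx.2]
  simp only [Qfun_eq_rpow hqq' hγ hx, Qfun_eq_rpow hqq' hγ hy, sub_lt_sub_iff_right]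
  refine Real.rpow_lt_rpow (by have := hx.1; positivity) (add_lt_add_of_le_of_lt ?_ ?_) hq0
  · exact mul_le_mul hxy.le (Real.rpow_le_rpow hBx hB.le (by positivity)) (by positivity)
      (by linarith [hx.1])
  · exact mul_lt_mul_of_pos_left (Real.rpow_lt_rpow hBx hB (div_pos (by linarith [hqq'.lt]) hq0))
      (by positivity)

lemma continuousOn_Qfun (hqq' : q.HolderConjugate q') (hγ : 0 < γ)
    (hF' : ContinuousOn F' (Ici 0)) :
    ContinuousOn (fun p => Qfun q q' γ F' m w p 0) (rootDomain γ F' m) := by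
  have hq0 := hqq'.pos
  have hB : ContinuousOn (fun p => p + γ * F' p - m) (rootDomain γ F' m) :=
    (continuousOn_id.add (continuousOn_const.mul (hF'.mono fun p hp => hp.1))).sub
      continuousOn_const
  refine ContinuousOn.congr ?_ fun p hp => Qfun_eq_rpow hqq' hγ hp
  refine ContinuousOn.sub (ContinuousOn.rpow_const ?_ fun _ _ => Or.inr hq0.le) continuousOn_const
  exact (continuousOn_id.mul (hB.rpow_const fun _ _ => Or.inr (by positivity))).add
    (continuousOn_const.mul (hB.rpow_const fun _ _ => Or.inr
      (div_nonneg (by linarith [hqq'.lt]) hq0.le)))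

lemma add_le_of_monotoneOn (hγ : 0 < γ) (hF' : MonotoneOn F' (Ici 0)) {x y : ℝ} (hx : 0 ≤ x)
    (hxy : x ≤ y) : x + γ * F' x - m + (y - x) ≤ y + γ * F' y - m := by
  have := mul_le_mul_of_nonneg_left (hF' hx (hx.trans hxy) hxy) hγ.le
  linarith

lemma Icc_subset_rootDomain (hγ : 0 < γ) (hF' : MonotoneOn F' (Ici 0)) {a b : ℝ}
    (ha : a ∈ rootDomain γ F' m) : Icc a b ⊆ rootDomain γ F' m := fun x hx =>
  ⟨ha.1.trans hx.1, by linarith [add_le_of_monotoneOn (m := m) hγ hF' ha.1 hx.1, ha.2, hx.1]⟩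

lemma exists_mem_rootDomain_Qfun_nonpos (hq' : 0 < q') (hγ : 0 < γ) (hF' : MonotoneOn F' (Ici 0))
    (hF'c : ContinuousOn F' (Ici 0)) (hneg : ¬ (m ≤ γ * F' 0 ∧ 0 ≤ Qfun q q' γ F' m w 0 0)) :
    ∃ p ∈ rootDomain γ F' m, Qfun q q' γ F' m w p 0 ≤ 0 ∧ (0 < p ∨ Qfun q q' γ F' m w p 0 < 0) := by
  by_cases hm : m ≤ γ * F' 0
  · have hQ : Qfun q q' γ F' m w 0 0 < 0 := lt_of_not_ge fun h => hneg ⟨hm, h⟩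
    exact ⟨0, ⟨le_rfl, by simpa using hm⟩, hQ.le, Or.inr hQ⟩
  have hB : ContinuousOn (fun p => p + γ * F' p - m) (Icc 0 (m - γ * F' 0)) :=
    (continuousOn_id.add (continuousOn_const.mul (hF'c.mono fun p hp => hp.1))).sub
      continuousOn_const
  obtain ⟨p, hp, hBp⟩ : (0 : ℝ) ∈ (fun p => p + γ * F' p - m) '' Icc 0 (m - γ * F' 0) :=
    intermediate_value_Icc (by linarith) hB ⟨by linarith, by
      linarith [add_le_of_monotoneOn (m := m) hγ hF' le_rfl (by linarith : 0 ≤ m - γ * F' 0)]⟩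
  replace hBp : p + γ * F' p - m = 0 := hBp
  have hp0 : 0 < p := lt_of_le_of_ne hp.1 fun h => by subst h; linarith
  refine ⟨p, ⟨hp.1, by linarith⟩, ?_, Or.inl hp0⟩
  simp only [Qfun, add_zero, hBp, zero_mul, zero_sub, neg_nonpos]
  exact mul_nonneg (by positivity) (Real.rpow_nonneg (nrm4_nonneg _) _)

lemma exists_ge_Qfun_nonneg (hq : 1 < q) (hq' : 0 < q') (hγ : 0 < γ)
    (hF' : MonotoneOn F' (Ici 0)) (a : ℝ) :
    ∃ M ∈ rootDomain γ F' m, a ≤ M ∧ 0 ≤ Qfun q q' γ F' m w M 0 := by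
  set T := γ / q' * nrm4 (PK w) ^ q
  have hT : 0 ≤ T := mul_nonneg (by positivity) (Real.rpow_nonneg (nrm4_nonneg _) _)
  set M := max a (max 1 (T - (γ * F' 0 - m)))
  have hM1 : 1 ≤ M := le_max_of_le_right (le_max_left _ _)
  have hBM : T ≤ M + γ * F' M - m := by
    have := add_le_of_monotoneOn (m := m) hγ hF' le_rfl (zero_le_one.trans hM1)
    have : T - (γ * F' 0 - m) ≤ M := le_max_of_le_right (le_max_right _ _)
    linarith
  refine ⟨M, ⟨by linarith, by linarith⟩, le_max_left _ _, ?_⟩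
  have hE : 1 ≤ (M + γ ^ (2 / q) * q' ^ (1 - 2 / q) * (M + γ * F' M - m) ^ (1 - 2 / q)) ^ q :=
    Real.one_le_rpow (le_add_of_le_of_nonneg hM1 (by have := hT.trans hBM; positivity))
      (by linarith)
  simp only [Qfun, add_zero, sub_nonneg]
  nlinarith

theorem existsUnique_Qfun_root (hqq' : q.HolderConjugate q') (hγ : 0 < γ)
    (hF' : MonotoneOn F' (Ici 0)) (hF'c : ContinuousOn F' (Ici 0))
    (hneg : ¬ (m ≤ γ * F' 0 ∧ 0 ≤ Qfun q q' γ F' m w 0 0)) :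
    ∃ p : ℝ, 0 < p ∧ m ≤ p + γ * F' p ∧ Qfun q q' γ F' m w p 0 = 0 ∧
      ∀ p' : ℝ, 0 ≤ p' → m ≤ p' + γ * F' p' → Qfun q q' γ F' m w p' 0 = 0 → p' = p := by
  obtain ⟨a, ha, hQa, ha0⟩ := exists_mem_rootDomain_Qfun_nonpos hqq'.symm.pos hγ hF' hF'c hneg
  obtain ⟨M, -, haM, hQM⟩ := exists_ge_Qfun_nonneg (m := m) (w := w) hqq'.lt hqq'.symm.pos hγ hF' a
  have hsub := Icc_subset_rootDomain (b := M) hγ hF' ha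
  obtain ⟨p, hp, hQp⟩ := intermediate_value_Icc haM
    ((continuousOn_Qfun hqq' hγ hF'c).mono hsub) ⟨hQa, hQM⟩
  have hp0 : 0 < p := by
    rcases ha0 with ha0 | hQa
    · exact ha0.trans_le hp.1
    · refine (ha.1.trans hp.1).lt_of_ne fun h => ?_
      obtain rfl : a = p := le_antisymm hp.1 (h ▸ ha.1)
      linarith
  refine ⟨p, hp0, (hsub hp).2, hQp, fun p' hp' hmp' hQp' => ?_⟩
  exact (strictMonoOn_Qfun hqq' hγ hF').injOn ⟨hp', hmp'⟩ (hsub hp) (hQp'.trans hQp.symm)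

end Root

/-- computation of `prox_{γφ}` for `φ(m,w) = F(m) + b̂(m,w)`
(with `F` convex on `[0,∞)`, differentiable with finite right derivative at 0,
`+∞` on the negatives): if `m ≤ γF'(0)` and `Q_{m,w}(0,0) ≥ 0` the prox is `(0,0)`;
otherwise it is `(p*, v_{m,w}(p*,0))` where `p* > 0` is the unique root of
`Q_{m,w}(·,0)` in the domain `D(m)`. -/
theorem stmt12 (q q' γ : ℝ) (hq : 1 < q) (hconj : 1 / q + 1 / q' = 1) (hγ : 0 < γ)
    (Freal F' : ℝ → ℝ)
    (hFconv : ConvexOn ℝ (Set.Ici 0) Freal)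
    (hFder : ∀ p ∈ Set.Ici (0 : ℝ), HasDerivWithinAt Freal (F' p) (Set.Ici 0) p)
    (m : ℝ) (w : Fin 4 → ℝ) :
    (m ≤ γ * F' 0 ∧ 0 ≤ Qfun q q' γ F' m w 0 0 →
      ∀ z : ℝ × (Fin 4 → ℝ),
        (γ : EReal) * (bhat q 0 0 + ((Freal 0 : ℝ) : EReal))
            + (((m - 0) ^ 2 + ∑ i, (w i - 0) ^ 2) / 2 : ℝ)
          ≤ (γ : EReal) * (bhat q z.1 z.2 + (if 0 ≤ z.1 then ((Freal z.1 : ℝ) : EReal) else ⊤))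
            + (((m - z.1) ^ 2 + ∑ i, (w i - z.2 i) ^ 2) / 2 : ℝ))
    ∧ (¬ (m ≤ γ * F' 0 ∧ 0 ≤ Qfun q q' γ F' m w 0 0) →
      ∃ p : ℝ, 0 < p ∧ m ≤ p + γ * F' p ∧ Qfun q q' γ F' m w p 0 = 0 ∧
        (∀ p' : ℝ, 0 ≤ p' → m ≤ p' + γ * F' p' → Qfun q q' γ F' m w p' 0 = 0 → p' = p) ∧
        ∀ z : ℝ × (Fin 4 → ℝ),
          (γ : EReal) * (bhat q p (vfun q q' γ F' m w p 0) + ((Freal p : ℝ) : EReal))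
              + (((m - p) ^ 2 + ∑ i, (w i - vfun q q' γ F' m w p 0 i) ^ 2) / 2 : ℝ)
            ≤ (γ : EReal) * (bhat q z.1 z.2 + (if 0 ≤ z.1 then ((Freal z.1 : ℝ) : EReal) else ⊤))
              + (((m - z.1) ^ 2 + ∑ i, (w i - z.2 i) ^ 2) / 2 : ℝ)) := by
  have hqq' : q.HolderConjugate q' :=
    Real.holderConjugate_iff.2 ⟨hq, by simpa only [one_div] using hconj⟩
  have hF s (hs : 0 ≤ s) p (hp : 0 ≤ p) := hFconv.add_deriv_mul_sub_le (x := s) (y := p) hFder hs hp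
  refine ⟨fun ⟨hm, hQ⟩ z => ?_, fun hneg => ?_⟩
  · have h0 := coe_proxObjective (q := q) (γ := γ) (F := Freal) (m := m) (w := w)
      le_rfl (by simp [Kset]) fun _ => rfl
    simp only [Pi.zero_apply] at h0
    rw [← h0]
    exact coe_le_of_forall_le_proxObjective hγ
      (fun p v hp hv hpv => proxObjective_zero_le hqq' hγ hm hQ (hF 0 le_rfl) hp hv hpv) z
  · obtain ⟨s, hs, hms, hQs, huniq⟩ := existsUnique_Qfun_root hqq' hγ
      (hFconv.monotoneOn_of_hasDerivWithinAt hFder) (hFconv.continuousOn_of_hasDerivWithinAt hFder)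
      hneg
    refine ⟨s, hs, hms, hQs, huniq, fun z => ?_⟩
    rw [← coe_proxObjective hs.le (vfun_mem_Kset hqq'.symm.pos hγ hs.le (by linarith))
      fun h => absurd h hs.ne']
    exact coe_le_of_forall_le_proxObjective hγ (fun p v hp hv hpv =>
      proxObjective_vfun_le hqq' hγ hs (by linarith) hQs (hF s hs.le) hp hv hpv) z
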